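/- For a metric space Y the following three conditions are equivalent: (i) Y is not shifted; (ii) Y is a minimal universal metric space for the one-element family {Y}; (iii) there exists a family 𝔐 of metric spaces such that Y is minimal 𝔐-universal. -/

import Mathlib

universe u v w

open Function Set

/-- `f` is an isometric (distance-preserving) embedding of metric spaces. -/
def IsIsomEmb {X : Type u} {Y : Type v} [MetricSpace X] [MetricSpace Y] (f : X → Y) : Prop :=
  ∀ a b : X, dist (f a) (f b) = dist a b

/-- `X` embeds isometrically into `Y`. -/
def IsomEmbeds (X : Type u) (Y : Type v) [MetricSpace X] [MetricSpace Y] : Prop :=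
  ∃ f : X → Y, IsIsomEmb f

/-- `X` and `Y` are isometric: there is a surjective isometric embedding of `X` onto `Y`. -/
def IsIsometricTo (X : Type u) (Y : Type v) [MetricSpace X] [MetricSpace Y] : Prop :=
  ∃ f : X → Y, IsIsomEmb f ∧ Surjective f

/-- `X` is not shifted: every isometric self-embedding of `X` is surjective. -/
def NotShifted (X : Type u) [MetricSpace X] : Prop :=
  ∀ f : X → X, IsIsomEmb f → Surjective f

/-- `Y` is universal for the family `M` of metric spaces. -/
def UnivFor {ι : Type w} (M : ι → Type u) [∀ i, MetricSpace (M i)]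
    (Y : Type v) [MetricSpace Y] : Prop :=
  ∀ i, IsomEmbeds (M i) Y

/-- `Y` is minimal universal for the family `M` of metric spaces: `Y` is `M`-universal and
every subset of `Y` (with the induced metric) which is `M`-universal equals `Y`. -/
def MinUnivFor {ι : Type w} (M : ι → Type u) [∀ i, MetricSpace (M i)]
    (Y : Type v) [MetricSpace Y] : Prop :=
  UnivFor M Y ∧ ∀ S : Set Y, UnivFor M ↥S → S = Set.univ

theorem IsIsomEmb.comp {A B C : Type*} [MetricSpace A] [MetricSpace B]
    [MetricSpace C] {g : B → C} {f : A → B}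
    (hg : IsIsomEmb g) (hf : IsIsomEmb f) : IsIsomEmb (g ∘ f) :=
  fun a b => (hg (f a) (f b)).trans (hf a b)

section

variable {ι : Type w} {M : ι → Type u} [∀ i, MetricSpace (M i)]
  {X : Type*} {Y : Type v} [MetricSpace X] [MetricSpace Y]

theorem isIsomEmb_subtype_val (S : Set Y) : IsIsomEmb (Subtype.val : S → Y) :=
  fun _ _ => rfl

theorem UnivFor.range_of_isIsomEmb (hX : UnivFor M X) {f : X → Y} (hf : IsIsomEmb f) :
    UnivFor M (range f) := fun i =>
  let ⟨g, hg⟩ := hX i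
  ⟨rangeFactorization f ∘ g, IsIsomEmb.comp (g := rangeFactorization f) hf hg⟩

theorem MinUnivFor.notShifted (h : MinUnivFor M Y) : NotShifted Y := fun _ hf =>
  range_eq_univ.mp (h.2 _ (h.1.range_of_isIsomEmb hf))

theorem NotShifted.minUnivFor_const {κ : Type w} [Nonempty κ] (h : NotShifted Y) :
    MinUnivFor (fun _ : κ => Y) Y := by
  refine ⟨fun _ => ⟨id, fun _ _ => rfl⟩, fun S hS => ?_⟩
  obtain ⟨f, hf⟩ := hS (Classical.arbitrary κ)
  have hsurj : Surjective (Subtype.val ∘ f) := h _ ((isIsomEmb_subtype_val S).comp hf)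
  exact eq_univ_of_forall fun y =>
    let ⟨x, hx⟩ := hsurj y
    hx ▸ (f x).2

end

theorem statement0 (Y : Type u) [instY : MetricSpace Y] :
    (NotShifted Y ↔ MinUnivFor (fun _ : PUnit.{u + 1} => Y) Y) ∧
    (NotShifted Y ↔
      ∃ (ι : Type u) (M : ι → Type u) (instM : ∀ i, MetricSpace (M i)),
        @MinUnivFor ι M instM Y instY) :=
  ⟨⟨NotShifted.minUnivFor_const (κ := PUnit), MinUnivFor.notShifted⟩,
    ⟨fun h => ⟨PUnit, _, _, h.minUnivFor_const⟩, fun ⟨_, _, _, h⟩ => h.notShifted⟩⟩
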